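/- Let G be a σ-compact locally compact group, Q a symmetric open relatively compact unit neighborhood, and Λ, Γ, Ω relatively separated families in G. Suppose M = (M_{ω,γ}) satisfies |M_{ω,γ}| ≤ min{Φ(γ⁻¹ω), Φ(ω⁻¹γ)} and N = (N_{γ,λ}) satisfies |N_{γ,λ}| ≤ min{Φ'(λ⁻¹γ), Φ'(γ⁻¹λ)} for continuous nonnegative Φ, Φ' with M_QΦ, M_Q^RΦ, M_QΦ', M_Q^RΦ' ∈ L¹(G). Then the product matrix (MN)_{ω,λ} = Σ_{γ∈Γ} M_{ω,γ} N_{γ,λ} is well-defined and satisfies |(MN)_{ω,λ}| ≤ min{Ψ(λ⁻¹ω), Ψ(ω⁻¹λ)} where Ψ = (Rel(Γ)/μ_G(Q)) · [ (M_QΦ') ∗ (M_Q^RΦ) + (M_QΦ) ∗ (M_Q^RΦ') ]. -/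

import Mathlib

open MeasureTheory Measure
open scoped Pointwise ENNReal NNReal

/-!
Integrate the envelope bound over the translates `γ • Q`: for `t ∈ γ • Q` one has
`Φ' (λ⁻¹ γ) Φ (γ⁻¹ ω) ≤ M_Q Φ' (λ⁻¹ t) · M_Q^R Φ (t⁻¹ ω)`, so each term of the product sum is at
most the average of this function over `γ • Q`. Since at most `Rel(Γ)` of these translates contain
a given point, the sum is at most `Rel(Γ) / μ(Q)` times the integral, which by left invariance is
the convolution `(M_Q Φ' ∗ M_Q^R Φ)(λ⁻¹ ω)`. The symmetric estimate gives the other term. The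
same counting, applied to one envelope at a time, makes the sums finite.
-/

theorem ENNReal.tsum_mul_le_tsum_mul_tsum {ι : Type*} (a b : ι → ℝ≥0∞) :
    ∑' i, a i * b i ≤ (∑' i, a i) * ∑' i, b i :=
  calc ∑' i, a i * b i ≤ ∑' i, a i * ∑' j, b j :=
        ENNReal.tsum_le_tsum fun i => mul_le_mul_right (ENNReal.le_tsum i) _
    _ = (∑' i, a i) * ∑' i, b i := ENNReal.tsum_mul_right

namespace ConvolutionDominated

variable {G : Type*} [Group G]

/-- `M_Q Φ` -/
noncomputable def leftLocalMax (Q : Set G) (Φ : G → ℝ≥0∞) (x : G) : ℝ≥0∞ := ⨆ q ∈ Q, Φ (x * q)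

/-- `M_Q^R Φ` -/
noncomputable def rightLocalMax (Q : Set G) (Φ : G → ℝ≥0∞) (x : G) : ℝ≥0∞ := ⨆ q ∈ Q, Φ (q * x)

/-- `Rel(P) ≤ n` -/
def IsRelSeparated {ι : Type*} (Q : Set G) (n : ℕ) (P : ι → G) : Prop :=
  ∀ x : G, {i | P i ∈ x • Q}.Finite ∧ {i | P i ∈ x • Q}.ncard ≤ n

/-- The envelope `Ψ`, with `n` in place of `Rel(Γ)`. -/
noncomputable def productEnvelope [MeasurableSpace G] (μ : Measure G) (Q : Set G) (n : ℕ)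
    (Φ Φ' : G → ℝ≥0∞) (x : G) : ℝ≥0∞ :=
  (n : ℝ≥0∞) / μ Q * ((leftLocalMax Q Φ' ⋆ₘₗ[μ] rightLocalMax Q Φ) x
    + (leftLocalMax Q Φ ⋆ₘₗ[μ] rightLocalMax Q Φ') x)

variable {Q : Set G}

theorem productEnvelope_comm [MeasurableSpace G] (μ : Measure G) (n : ℕ) (Φ Φ' : G → ℝ≥0∞) :
    productEnvelope μ Q n Φ Φ' = productEnvelope μ Q n Φ' Φ := by
  ext x
  simp only [productEnvelope, add_comm]

theorem le_leftLocalMax {Φ : G → ℝ≥0∞} {x y : G} (h : y⁻¹ * x ∈ Q) :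
    Φ x ≤ leftLocalMax Q Φ y := by
  calc Φ x = Φ (y * (y⁻¹ * x)) := by rw [mul_inv_cancel_left]
    _ ≤ leftLocalMax Q Φ y := le_iSup₂ (f := fun q _ => Φ (y * q)) _ h

theorem le_rightLocalMax {Φ : G → ℝ≥0∞} {x y : G} (h : x * y⁻¹ ∈ Q) :
    Φ x ≤ rightLocalMax Q Φ y := by
  calc Φ x = Φ (x * y⁻¹ * y) := by rw [inv_mul_cancel_right]
    _ ≤ rightLocalMax Q Φ y := le_iSup₂ (f := fun q _ => Φ (q * y)) _ h

section Topology

variable [TopologicalSpace G] [ContinuousMul G] [MeasurableSpace G] [OpensMeasurableSpace G]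
  {Φ : G → ℝ≥0∞}

theorem measurable_leftLocalMax (hΦ : Continuous Φ) : Measurable (leftLocalMax Q Φ) :=
  (lowerSemicontinuous_biSup fun q _ =>
    (hΦ.comp (continuous_mul_const q)).lowerSemicontinuous).measurable

theorem measurable_rightLocalMax (hΦ : Continuous Φ) : Measurable (rightLocalMax Q Φ) :=
  (lowerSemicontinuous_biSup fun q _ =>
    (hΦ.comp (continuous_const_mul q)).lowerSemicontinuous).measurable

end Topology

theorem mem_smul_comm_of_inv_eq (hQ : Q⁻¹ = Q) {x y : G} : x ∈ y • Q ↔ y ∈ x • Q := by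
  rw [Set.mem_smul_set_iff_inv_smul_mem, Set.mem_smul_set_iff_inv_smul_mem, smul_eq_mul,
    smul_eq_mul, ← Set.inv_mem_inv, hQ, mul_inv_rev, inv_inv]

theorem lintegral_mul_comp_mul_left_eq_mlconvolution [MeasurableSpace G] [MeasurableMul G]
    (μ : Measure G) [μ.IsMulLeftInvariant] (f g : G → ℝ≥0∞) (a x : G) :
    ∫⁻ t, f (a⁻¹ * t) * g (t⁻¹ * x) ∂μ = (f ⋆ₘₗ[μ] g) (a⁻¹ * x) := by
  rw [← lintegral_mul_left_eq_self _ a, mlconvolution_def]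
  simp [mul_assoc]

namespace IsRelSeparated

variable {ι : Type*} {n : ℕ} {P : ι → G}

theorem countable [TopologicalSpace G] [ContinuousMul G] [SigmaCompactSpace G]
    (hQ : Q ∈ nhds (1 : G)) (hP : IsRelSeparated Q n P) : Countable ι := by
  have hfin : LocallyFinite fun i => ({P i} : Set G) := fun x =>
    ⟨x • Q, by simpa using smul_mem_nhds_smul x hQ, by
      simpa only [Set.singleton_inter_nonempty] using (hP x).1⟩
  exact Set.countable_univ_iff.mp (hfin.countable_univ fun i => Set.singleton_nonempty _)

theorem tsum_indicator_le (hQ : Q⁻¹ = Q) (hP : IsRelSeparated Q n P) (m : G → ℝ≥0∞) (t : G) :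
    ∑' i, (P i • Q).indicator m t ≤ n * m t := by
  have hind : ∀ i, (P i • Q).indicator m t = {i | P i ∈ t • Q}.indicator (fun _ => m t) i := by
    intro i
    by_cases hi : P i ∈ t • Q
    · simp [hi, (mem_smul_comm_of_inv_eq hQ).mpr hi]
    · simp [hi, mt (mem_smul_comm_of_inv_eq hQ).mp hi]
  calc ∑' i, (P i • Q).indicator m t
      = {i | P i ∈ t • Q}.encard * m t := by
        rw [tsum_congr hind, ← tsum_subtype, ENNReal.tsum_set_const]
    _ ≤ n * m t := by
        gcongr
        rw [← (hP t).1.cast_ncard_eq]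
        exact_mod_cast (hP t).2

section Integral

variable [MeasurableSpace G] [MeasurableMul G] (μ : Measure G) [μ.IsMulLeftInvariant]

theorem measure_mul_tsum_le_lintegral [Countable ι] (hQm : MeasurableSet Q) (hQ : Q⁻¹ = Q)
    (hP : IsRelSeparated Q n P) {f : ι → ℝ≥0∞} {m : G → ℝ≥0∞} (hm : Measurable m)
    (hfm : ∀ i, ∀ t ∈ P i • Q, f i ≤ m t) :
    μ Q * ∑' i, f i ≤ n * ∫⁻ t, m t ∂μ := by
  have hPQ : ∀ i, MeasurableSet (P i • Q) := fun i => hQm.const_smul (P i)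
  calc μ Q * ∑' i, f i
      = ∑' i, ∫⁻ t, (P i • Q).indicator (fun _ => f i) t ∂μ := by
        rw [← ENNReal.tsum_mul_left]
        refine tsum_congr fun i => ?_
        rw [lintegral_indicator_const (hPQ i), measure_smul, mul_comm]
    _ ≤ ∑' i, ∫⁻ t, (P i • Q).indicator m t ∂μ := by
        refine ENNReal.tsum_le_tsum fun i => lintegral_mono fun t => ?_
        by_cases ht : t ∈ P i • Q
        · simpa [ht] using hfm i t ht
        · simp [ht]
    _ = ∫⁻ t, ∑' i, (P i • Q).indicator m t ∂μ :=
        (lintegral_tsum fun i => (hm.indicator (hPQ i)).aemeasurable).symm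
    _ ≤ ∫⁻ t, n * m t ∂μ := lintegral_mono (hP.tsum_indicator_le hQ m)
    _ = n * ∫⁻ t, m t ∂μ := lintegral_const_mul _ hm

theorem tsum_le_div_mul_lintegral [Countable ι] (hQm : MeasurableSet Q) (hQ0 : μ Q ≠ 0)
    (hQtop : μ Q ≠ ∞) (hQ : Q⁻¹ = Q) (hP : IsRelSeparated Q n P) {f : ι → ℝ≥0∞}
    {m : G → ℝ≥0∞} (hm : Measurable m) (hfm : ∀ i, ∀ t ∈ P i • Q, f i ≤ m t) :
    ∑' i, f i ≤ n / μ Q * ∫⁻ t, m t ∂μ := by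
  rw [← ENNReal.mul_div_right_comm, ENNReal.le_div_iff_mul_le (Or.inl hQ0) (Or.inl hQtop), mul_comm]
  exact hP.measure_mul_tsum_le_lintegral μ hQm hQ hm hfm

end Integral

section Envelope

variable [TopologicalSpace G] [IsTopologicalGroup G] [MeasurableSpace G] [BorelSpace G]
  (μ : Measure G) [μ.IsMulLeftInvariant] [Countable ι]

theorem tsum_comp_mul_ne_top (hQm : MeasurableSet Q) (hQ0 : μ Q ≠ 0) (hQtop : μ Q ≠ ∞)
    (hQ : Q⁻¹ = Q) (hP : IsRelSeparated Q n P) {Φ : G → ℝ≥0∞} (hΦ : Continuous Φ)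
    (hint : ∫⁻ x, leftLocalMax Q Φ x ∂μ ≠ ∞) (c : G) : ∑' i, Φ (c * P i) ≠ ∞ := by
  have hle : ∑' i, Φ (c * P i) ≤ n / μ Q * ∫⁻ x, leftLocalMax Q Φ x ∂μ := by
    rw [← lintegral_mul_left_eq_self (leftLocalMax Q Φ) c]
    refine hP.tsum_le_div_mul_lintegral μ hQm hQ0 hQtop hQ
      ((measurable_leftLocalMax hΦ).comp (measurable_const_mul c)) fun i t ht => ?_
    have hq : t⁻¹ * P i ∈ Q :=
      Set.mem_smul_set_iff_inv_smul_mem.mp ((mem_smul_comm_of_inv_eq hQ).mp ht)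
    exact le_leftLocalMax (by simpa [mul_assoc] using hq)
  exact ne_top_of_le_ne_top (ENNReal.mul_ne_top (ENNReal.div_ne_top (by simp) hQ0) hint) hle

theorem tsum_mul_ne_top (hQm : MeasurableSet Q) (hQ0 : μ Q ≠ 0) (hQtop : μ Q ≠ ∞)
    (hQ : Q⁻¹ = Q) (hP : IsRelSeparated Q n P) {Φ Φ' : G → ℝ≥0∞} (hΦ : Continuous Φ)
    (hΦ' : Continuous Φ') (hint : ∫⁻ x, leftLocalMax Q Φ x ∂μ ≠ ∞)
    (hint' : ∫⁻ x, leftLocalMax Q Φ' x ∂μ ≠ ∞) {c d : G} {a b : ι → ℝ≥0∞}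
    (ha : ∀ i, a i ≤ Φ (c * P i)) (hb : ∀ i, b i ≤ Φ' (d * P i)) :
    ∑' i, a i * b i ≠ ∞ :=
  ne_top_of_le_ne_top
    (ENNReal.mul_ne_top (hP.tsum_comp_mul_ne_top μ hQm hQ0 hQtop hQ hΦ hint c)
      (hP.tsum_comp_mul_ne_top μ hQm hQ0 hQtop hQ hΦ' hint' d))
    ((ENNReal.tsum_le_tsum fun i => mul_le_mul' (ha i) (hb i)).trans
      (ENNReal.tsum_mul_le_tsum_mul_tsum _ _))

theorem tsum_mul_le_mlconvolution (hQm : MeasurableSet Q) (hQ0 : μ Q ≠ 0) (hQtop : μ Q ≠ ∞)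
    (hQ : Q⁻¹ = Q) (hP : IsRelSeparated Q n P) {Φ Φ' : G → ℝ≥0∞} (hΦ : Continuous Φ)
    (hΦ' : Continuous Φ') {ω l : G} {a b : ι → ℝ≥0∞} (ha : ∀ i, a i ≤ Φ ((P i)⁻¹ * ω))
    (hb : ∀ i, b i ≤ Φ' (l⁻¹ * P i)) :
    ∑' i, a i * b i ≤ n / μ Q * (leftLocalMax Q Φ' ⋆ₘₗ[μ] rightLocalMax Q Φ) (l⁻¹ * ω) := by
  rw [← lintegral_mul_comp_mul_left_eq_mlconvolution]
  refine hP.tsum_le_div_mul_lintegral μ hQm hQ0 hQtop hQ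
    (((measurable_leftLocalMax hΦ').comp (measurable_const_mul _)).mul
      ((measurable_rightLocalMax hΦ).comp (measurable_inv.mul_const _))) fun i t ht => ?_
  have hq : (P i)⁻¹ * t ∈ Q := Set.mem_smul_set_iff_inv_smul_mem.mp ht
  have hq' : t⁻¹ * P i ∈ Q :=
    Set.mem_smul_set_iff_inv_smul_mem.mp ((mem_smul_comm_of_inv_eq hQ).mp ht)
  rw [mul_comm]
  exact mul_le_mul' ((hb i).trans (le_leftLocalMax (by simpa [mul_assoc] using hq')))
    ((ha i).trans (le_rightLocalMax (by simpa [mul_assoc] using hq)))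

theorem tsum_mul_le_productEnvelope (hQm : MeasurableSet Q) (hQ0 : μ Q ≠ 0) (hQtop : μ Q ≠ ∞)
    (hQ : Q⁻¹ = Q) (hP : IsRelSeparated Q n P) {Φ Φ' : G → ℝ≥0∞} (hΦ : Continuous Φ)
    (hΦ' : Continuous Φ') {ω l : G} {a b : ι → ℝ≥0∞} (ha : ∀ i, a i ≤ Φ ((P i)⁻¹ * ω))
    (hb : ∀ i, b i ≤ Φ' (l⁻¹ * P i)) :
    ∑' i, a i * b i ≤ productEnvelope μ Q n Φ Φ' (l⁻¹ * ω) :=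
  (hP.tsum_mul_le_mlconvolution μ hQm hQ0 hQtop hQ hΦ hΦ' ha hb).trans
    (mul_le_mul_right le_self_add _)

end Envelope

end IsRelSeparated

end ConvolutionDominated

open ConvolutionDominated

theorem convolution_dominated_matrix_product_general
    {G : Type*} [Group G] [TopologicalSpace G] [IsTopologicalGroup G]
    [SigmaCompactSpace G]
    [MeasurableSpace G] [BorelSpace G]
    (μ : Measure G) [μ.IsHaarMeasure]
    -- fixed symmetric open relatively compact unit neighborhood Q
    (Q : Set G) (hQopen : IsOpen Q) (hQone : (1 : G) ∈ Q) (hQsymm : Q⁻¹ = Q)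
    (hQcomp : IsCompact (closure Q))
    -- relatively separated families with Rel(Γ) ≤ NΓ
    {ιΛ ιΓ ιΩ : Type*} (Λ : ιΛ → G) (Γ : ιΓ → G) (Ω : ιΩ → G) (NΓ : ℕ)
    (hΓ : ∀ x : G, {i : ιΓ | Γ i ∈ x • Q}.Finite ∧ {i : ιΓ | Γ i ∈ x • Q}.ncard ≤ NΓ)
    -- continuous nonnegative (finite-valued) envelopes with integrable maximal functions
    (Φ Φ' : G → ℝ≥0∞) (hΦc : Continuous Φ) (hΦ'c : Continuous Φ')
    (hMQΦ : (∫⁻ x, ⨆ q ∈ Q, Φ (x * q) ∂μ) ≠ ∞)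
    (hMQΦ' : (∫⁻ x, ⨆ q ∈ Q, Φ' (x * q) ∂μ) ≠ ∞)
    -- the dominated matrices
    (M : ιΩ → ιΓ → ℂ) (N : ιΓ → ιΛ → ℂ)
    (hM : ∀ o g, (‖M o g‖₊ : ℝ≥0∞) ≤ min (Φ ((Γ g)⁻¹ * Ω o)) (Φ ((Ω o)⁻¹ * Γ g)))
    (hN : ∀ g l, (‖N g l‖₊ : ℝ≥0∞) ≤ min (Φ' ((Λ l)⁻¹ * Γ g)) (Φ' ((Γ g)⁻¹ * Λ l))) :
    ∀ (o : ιΩ) (l : ιΛ),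
      Summable (fun g : ιΓ => M o g * N g l) ∧
      (∑' g : ιΓ, (‖M o g‖₊ : ℝ≥0∞) * (‖N g l‖₊ : ℝ≥0∞))
        ≤ min
            (((NΓ : ℝ≥0∞) / μ Q) *
              ((∫⁻ t, (⨆ q ∈ Q, Φ' (t * q)) * ⨆ q ∈ Q, Φ (q * (t⁻¹ * ((Λ l)⁻¹ * Ω o))) ∂μ)
                + ∫⁻ t, (⨆ q ∈ Q, Φ (t * q)) * ⨆ q ∈ Q, Φ' (q * (t⁻¹ * ((Λ l)⁻¹ * Ω o))) ∂μ))
            (((NΓ : ℝ≥0∞) / μ Q) *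
              ((∫⁻ t, (⨆ q ∈ Q, Φ' (t * q)) * ⨆ q ∈ Q, Φ (q * (t⁻¹ * ((Ω o)⁻¹ * Λ l))) ∂μ)
                + ∫⁻ t, (⨆ q ∈ Q, Φ (t * q)) * ⨆ q ∈ Q, Φ' (q * (t⁻¹ * ((Ω o)⁻¹ * Λ l))) ∂μ)) ∧
      (‖∑' g : ιΓ, M o g * N g l‖₊ : ℝ≥0∞)
        ≤ min
            (((NΓ : ℝ≥0∞) / μ Q) *
              ((∫⁻ t, (⨆ q ∈ Q, Φ' (t * q)) * ⨆ q ∈ Q, Φ (q * (t⁻¹ * ((Λ l)⁻¹ * Ω o))) ∂μ)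
                + ∫⁻ t, (⨆ q ∈ Q, Φ (t * q)) * ⨆ q ∈ Q, Φ' (q * (t⁻¹ * ((Λ l)⁻¹ * Ω o))) ∂μ))
            (((NΓ : ℝ≥0∞) / μ Q) *
              ((∫⁻ t, (⨆ q ∈ Q, Φ' (t * q)) * ⨆ q ∈ Q, Φ (q * (t⁻¹ * ((Ω o)⁻¹ * Λ l))) ∂μ)
                + ∫⁻ t, (⨆ q ∈ Q, Φ (t * q)) * ⨆ q ∈ Q, Φ' (q * (t⁻¹ * ((Ω o)⁻¹ * Λ l))) ∂μ)) := by
  intro o l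
  have hQ0 : μ Q ≠ 0 := (hQopen.measure_pos μ ⟨1, hQone⟩).ne'
  have hQtop : μ Q ≠ ∞ := ((measure_mono subset_closure).trans_lt hQcomp.measure_lt_top).ne
  have hQm : MeasurableSet Q := hQopen.measurableSet
  have := IsRelSeparated.countable (hQopen.mem_nhds hQone) hΓ
  have hle : ∑' g, (‖M o g‖₊ : ℝ≥0∞) * ‖N g l‖₊ ≤
      min (productEnvelope μ Q NΓ Φ Φ' ((Λ l)⁻¹ * Ω o))
        (productEnvelope μ Q NΓ Φ Φ' ((Ω o)⁻¹ * Λ l)) := by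
    refine le_min (IsRelSeparated.tsum_mul_le_productEnvelope μ hQm hQ0 hQtop
      hQsymm hΓ hΦc hΦ'c (fun g => (hM o g).trans (min_le_left _ _))
      (fun g => (hN g l).trans (min_le_left _ _))) ?_
    rw [productEnvelope_comm, tsum_congr fun g => mul_comm _ _]
    exact IsRelSeparated.tsum_mul_le_productEnvelope μ hQm hQ0 hQtop hQsymm hΓ
      hΦ'c hΦc (fun g => (hN g l).trans (min_le_right _ _))
      (fun g => (hM o g).trans (min_le_right _ _))
  have hfin : ∑' g, (‖M o g‖₊ : ℝ≥0∞) * ‖N g l‖₊ ≠ ∞ :=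
    IsRelSeparated.tsum_mul_ne_top μ hQm hQ0 hQtop hQsymm hΓ hΦc hΦ'c hMQΦ hMQΦ'
      (fun g => (hM o g).trans (min_le_right _ _)) (fun g => (hN g l).trans (min_le_left _ _))
  have hsum : Summable fun g => M o g * N g l := Summable.of_enorm <| by
    simp_rw [enorm_mul]
    exact hfin
  have hnorm : (‖∑' g, M o g * N g l‖₊ : ℝ≥0∞) ≤ ∑' g, (‖M o g‖₊ : ℝ≥0∞) * ‖N g l‖₊ :=
    (enorm_tsum_le_tsum_enorm (f := fun g => M o g * N g l)).trans_eq
      (tsum_congr fun g => enorm_mul _ _)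
  exact ⟨hsum, hle, hnorm.trans hle⟩

/-- Proposition 4.3 (iv): convolution-dominated matrices are closed under
multiplication, with explicit envelope
`Ψ = (Rel(Γ)/μ(Q)) · [(M_Q Φ') ∗ (M_Q^R Φ) + (M_Q Φ) ∗ (M_Q^R Φ')]`. -/
theorem convolution_dominated_matrix_product
    {G : Type*} [Group G] [TopologicalSpace G] [IsTopologicalGroup G]
    [LocallyCompactSpace G] [SigmaCompactSpace G]
    [MeasurableSpace G] [BorelSpace G]
    (μ : Measure G) [μ.IsHaarMeasure]
    -- fixed symmetric open relatively compact unit neighborhood Q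
    (Q : Set G) (hQopen : IsOpen Q) (hQone : (1 : G) ∈ Q) (hQsymm : Q⁻¹ = Q)
    (hQcomp : IsCompact (closure Q))
    -- relatively separated families with Rel(Γ) ≤ NΓ
    {ιΛ ιΓ ιΩ : Type*} (Λ : ιΛ → G) (Γ : ιΓ → G) (Ω : ιΩ → G) (NΛ NΓ NΩ : ℕ)
    (hΛ : ∀ x : G, {i : ιΛ | Λ i ∈ x • Q}.Finite ∧ {i : ιΛ | Λ i ∈ x • Q}.ncard ≤ NΛ)
    (hΓ : ∀ x : G, {i : ιΓ | Γ i ∈ x • Q}.Finite ∧ {i : ιΓ | Γ i ∈ x • Q}.ncard ≤ NΓ)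
    (hΩ : ∀ x : G, {i : ιΩ | Ω i ∈ x • Q}.Finite ∧ {i : ιΩ | Ω i ∈ x • Q}.ncard ≤ NΩ)
    -- continuous nonnegative (finite-valued) envelopes with integrable maximal functions
    (Φ Φ' : G → ℝ≥0∞) (hΦc : Continuous Φ) (hΦ'c : Continuous Φ')
    (hΦfin : ∀ x, Φ x ≠ ∞) (hΦ'fin : ∀ x, Φ' x ≠ ∞)
    (hMQΦ : (∫⁻ x, ⨆ q ∈ Q, Φ (x * q) ∂μ) ≠ ∞)
    (hMQRΦ : (∫⁻ x, ⨆ q ∈ Q, Φ (q * x) ∂μ) ≠ ∞)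
    (hMQΦ' : (∫⁻ x, ⨆ q ∈ Q, Φ' (x * q) ∂μ) ≠ ∞)
    (hMQRΦ' : (∫⁻ x, ⨆ q ∈ Q, Φ' (q * x) ∂μ) ≠ ∞)
    -- the dominated matrices
    (M : ιΩ → ιΓ → ℂ) (N : ιΓ → ιΛ → ℂ)
    (hM : ∀ o g, (‖M o g‖₊ : ℝ≥0∞) ≤ min (Φ ((Γ g)⁻¹ * Ω o)) (Φ ((Ω o)⁻¹ * Γ g)))
    (hN : ∀ g l, (‖N g l‖₊ : ℝ≥0∞) ≤ min (Φ' ((Λ l)⁻¹ * Γ g)) (Φ' ((Γ g)⁻¹ * Λ l))) :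
    ∀ (o : ιΩ) (l : ιΛ),
      Summable (fun g : ιΓ => M o g * N g l) ∧
      (∑' g : ιΓ, (‖M o g‖₊ : ℝ≥0∞) * (‖N g l‖₊ : ℝ≥0∞))
        ≤ min
            (((NΓ : ℝ≥0∞) / μ Q) *
              ((∫⁻ t, (⨆ q ∈ Q, Φ' (t * q)) * ⨆ q ∈ Q, Φ (q * (t⁻¹ * ((Λ l)⁻¹ * Ω o))) ∂μ)
                + ∫⁻ t, (⨆ q ∈ Q, Φ (t * q)) * ⨆ q ∈ Q, Φ' (q * (t⁻¹ * ((Λ l)⁻¹ * Ω o))) ∂μ))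
            (((NΓ : ℝ≥0∞) / μ Q) *
              ((∫⁻ t, (⨆ q ∈ Q, Φ' (t * q)) * ⨆ q ∈ Q, Φ (q * (t⁻¹ * ((Ω o)⁻¹ * Λ l))) ∂μ)
                + ∫⁻ t, (⨆ q ∈ Q, Φ (t * q)) * ⨆ q ∈ Q, Φ' (q * (t⁻¹ * ((Ω o)⁻¹ * Λ l))) ∂μ)) ∧
      (‖∑' g : ιΓ, M o g * N g l‖₊ : ℝ≥0∞)
        ≤ min
            (((NΓ : ℝ≥0∞) / μ Q) *
              ((∫⁻ t, (⨆ q ∈ Q, Φ' (t * q)) * ⨆ q ∈ Q, Φ (q * (t⁻¹ * ((Λ l)⁻¹ * Ω o))) ∂μ)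
                + ∫⁻ t, (⨆ q ∈ Q, Φ (t * q)) * ⨆ q ∈ Q, Φ' (q * (t⁻¹ * ((Λ l)⁻¹ * Ω o))) ∂μ))
            (((NΓ : ℝ≥0∞) / μ Q) *
              ((∫⁻ t, (⨆ q ∈ Q, Φ' (t * q)) * ⨆ q ∈ Q, Φ (q * (t⁻¹ * ((Ω o)⁻¹ * Λ l))) ∂μ)
                + ∫⁻ t, (⨆ q ∈ Q, Φ (t * q)) * ⨆ q ∈ Q, Φ' (q * (t⁻¹ * ((Ω o)⁻¹ * Λ l))) ∂μ)) :=
  convolution_dominated_matrix_product_general μ Q hQopen hQone hQsymm hQcomp Λ Γ Ω NΓ hΓ Φ Φ' hΦc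
    hΦ'c hMQΦ hMQΦ' M N hM hN
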